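/- arXiv:2202.09493 — 5 statements merged into one kernel-verified Lean document; each statement's English description precedes it below -/
import Mathlib

section
/- Let R be a principal ideal domain and R[x] a multivariate polynomial ring with a fixed monomial ordering. For any polynomial f in R[x] and any finite set B = {b_1,...,b_s} of nonzero polynomials in R[x] \ R, there exist a nonzero multiplier λ ∈ R, quotients q_1,...,q_s ∈ R[x], and a remainder r ∈ R[x] such that λ·f = q_1·b_1 + ... + q_s·b_s + r, where no monomial in the support of r lies in the monomial ideal generated by the leading monomials of b_1,...,b_s. -/
/-!
Over the fraction field `K` of `R` the leading coefficients of the `b j` are units, so the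
division algorithm `MonomialOrder.div` applies there. Multiplying the resulting identity by a
common denominator `λ` of the coefficients of the quotients and of the remainder brings it back
to `R[x]`, and scaling by `λ ≠ 0` does not enlarge the support of the remainder.
-/

open MvPolynomial

/-- The leading monomial (exponent) of `f` with respect to the monomial order `m`. -/
noncomputable def mdeg {σ : Type*} (m : MonomialOrder σ) {R : Type*} [CommSemiring R]
    (f : MvPolynomial σ R) : σ →₀ ℕ :=
  m.toSyn.symm (f.support.sup fun d => m.toSyn d)

theorem mdeg_eq_degree {σ : Type*} (m : MonomialOrder σ) {R : Type*} [CommSemiring R]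
    (f : MvPolynomial σ R) : mdeg m f = m.degree f :=
  rfl

namespace IsLocalization

variable {σ R S : Type*} [CommRing R] [CommRing S] [Algebra R S] (M : Submonoid R)
  [IsLocalization M S]

theorem exists_smul_mem_range_map_of_finset (P : Finset (MvPolynomial σ S)) :
    ∃ a : M, ∀ p ∈ P, (a : R) • p ∈ Set.range (MvPolynomial.map (algebraMap R S)) := by
  classical
  obtain ⟨a, ha⟩ := exist_integer_multiples_of_finset M (P.biUnion coeffs)
  refine ⟨a, fun p hp => mem_range_map_iff_coeffs_subset.mpr fun c hc => ?_⟩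
  obtain ⟨d, hd, rfl⟩ := mem_coeffs_iff.mp hc
  rw [coeff_smul]
  exact ha _ (Finset.mem_biUnion.mpr
    ⟨p, hp, coeff_mem_coeffs _ (mem_support_iff.mp (support_smul hd))⟩)

end IsLocalization

namespace MonomialOrder

variable {σ : Type*} (m : MonomialOrder σ)

theorem degree_map_of_injective {R S : Type*} [CommSemiring R] [CommSemiring S] {φ : R →+* S}
    (hφ : Function.Injective φ) (f : MvPolynomial σ R) : m.degree (map φ f) = m.degree f := by
  rw [degree, degree, support_map_of_injective f hφ]

theorem leadingCoeff_map_of_injective {R S : Type*} [CommSemiring R] [CommSemiring S]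
    {φ : R →+* S} (hφ : Function.Injective φ) (f : MvPolynomial σ R) :
    m.leadingCoeff (map φ f) = φ (m.leadingCoeff f) := by
  rw [leadingCoeff, leadingCoeff, degree_map_of_injective m hφ, coeff_map]

theorem pseudo_div {R ι : Type*} [CommRing R] [IsDomain R] [Fintype ι]
    {b : ι → MvPolynomial σ R} (hb : ∀ i, b i ≠ 0) (f : MvPolynomial σ R) :
    ∃ (lam : R) (q : ι → MvPolynomial σ R) (r : MvPolynomial σ R),
      lam ≠ 0 ∧ C lam * f = ∑ i, q i * b i + r ∧ ∀ d ∈ r.support, ∀ i, ¬ m.degree (b i) ≤ d := by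
  classical
  have hφ := IsFractionRing.injective R (FractionRing R)
  have hunit (i : ι) : IsUnit (m.leadingCoeff (map (algebraMap R (FractionRing R)) (b i))) := by
    rw [m.leadingCoeff_map_of_injective hφ, isUnit_iff_ne_zero, map_ne_zero_iff _ hφ]
    exact m.leadingCoeff_ne_zero_iff.mpr (hb i)
  obtain ⟨g, r, hf, -, hr⟩ := m.div hunit (map (algebraMap R (FractionRing R)) f)
  obtain ⟨a, ha⟩ := IsLocalization.exists_smul_mem_range_map_of_finset (nonZeroDivisors R)
    (insert r (Finset.univ.image g))
  choose q hq using fun i => ha (g i) (by simp)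
  obtain ⟨r', hr'⟩ := ha r (by simp)
  refine ⟨a, q, r', nonZeroDivisors.coe_ne_zero a, map_injective _ hφ ?_, fun d hd i hi => ?_⟩
  · simp only [map_add, map_mul, map_sum, map_C, hq, hr', hf, Finsupp.linearCombination_apply,
      smul_eq_mul, Algebra.smul_def, MvPolynomial.algebraMap_apply]
    rw [Finsupp.sum_fintype _ _ fun i => zero_mul _, mul_add, Finset.mul_sum]
    simp only [mul_assoc]
  · rw [← support_map_of_injective r' hφ, hr'] at hd
    exact hr d (support_smul hd) i (by rwa [m.degree_map_of_injective hφ])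

end MonomialOrder

theorem pseudo_division_over_PID_general {σ R : Type*} [CommRing R] [IsDomain R]
    (m : MonomialOrder σ) (s : ℕ)
    (b : Fin s → MvPolynomial σ R)
    (hb0 : ∀ j, b j ≠ 0)
    (f : MvPolynomial σ R) :
    ∃ (lam : R) (q : Fin s → MvPolynomial σ R) (r : MvPolynomial σ R),
      lam ≠ 0 ∧
      C lam * f = (∑ j, q j * b j) + r ∧
      ∀ d ∈ r.support, ∀ j, ¬ mdeg m (b j) ≤ d := by
  simp_rw [mdeg_eq_degree]
  exact m.pseudo_div hb0 f

/-- **Pseudo-division over a PID.**  For any `f` and any finite family `B = {b_1, …, b_s}` of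
nonzero polynomials not lying in `R`, there are a nonzero multiplier `λ ∈ R`, quotients `q_j`
and a remainder `r` with `λ·f = ∑ q_j·b_j + r`, where no monomial of the support of `r` lies in
the monomial ideal generated by the leading monomials of the `b_j`. -/
theorem pseudo_division_over_PID {σ R : Type*} [CommRing R] [IsDomain R]
    [IsPrincipalIdealRing R] (m : MonomialOrder σ) (s : ℕ)
    (b : Fin s → MvPolynomial σ R)
    (hb0 : ∀ j, b j ≠ 0)
    (hbR : ∀ j, b j ∉ Set.range (C : R → MvPolynomial σ R))
    (f : MvPolynomial σ R) :
    ∃ (lam : R) (q : Fin s → MvPolynomial σ R) (r : MvPolynomial σ R),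
      lam ≠ 0 ∧
      C lam * f = (∑ j, q j * b j) + r ∧
      ∀ d ∈ r.support, ∀ j, ¬ mdeg m (b j) ≤ d :=
  pseudo_division_over_PID_general m s b hb0 f
end

section
/- Let K be a field and f, g, h polynomials in (K[x_1])[x_2,...,x_n] none lying in K[x_1]. If lcm(lm(f), lm(g)) is divisible by lm(h), then λ·S(f,g) = (λ·lcm(lt(f),lt(g)) / lcm(lt(f),lt(h)))·S(f,h) − (λ·lcm(lt(f),lt(g)) / lcm(lt(g),lt(h)))·S(g,h), where λ = lc(h)/gcd(lcm(lc(f),lc(g)), lc(h)) ∈ K[x_1], and the displayed quotients of terms are genuine terms (the divisions are exact). -/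
/-! Since `lc h = d λ` with `d ∣ lcm(lc f, lc g)`, the coefficient `λ · lcm(lc f, lc g)` is a
common multiple of `lc f`, `lc g` and `lc h`, hence a multiple `w₁ · lcm(lc f, lc h)` and
`w₂ · lcm(lc g, lc h)`. Comparing cofactors gives `λ u_fg = w₁ u_fh`, `λ v_fg = w₂ u_gh` and
`w₁ v_fh = w₂ v_gh`; the last makes the two `h`-terms on the right cancel, and the monomial
shifts compose because `lm h ∣ lcm(lm f, lm g)` nests the exponents. -/

open MvPolynomial

/-- The leading coefficient of `f` with respect to the monomial order `m`. -/
noncomputable def lC {σ : Type*} (m : MonomialOrder σ) {R : Type*} [CommSemiring R]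
    (f : MvPolynomial σ R) : R :=
  f.coeff (mdeg m f)

/-- The leading term of `f` with respect to the monomial order `m`. -/
noncomputable def lT {σ : Type*} (m : MonomialOrder σ) {R : Type*} [CommSemiring R]
    (f : MvPolynomial σ R) : MvPolynomial σ R :=
  monomial (mdeg m f) (lC m f)

/-- `d` is a greatest common divisor of `a` and `b` (gcd's are unique up to units). -/
def IsGcd {α : Type*} [CommMonoid α] (d a b : α) : Prop :=
  d ∣ a ∧ d ∣ b ∧ ∀ e, e ∣ a → e ∣ b → e ∣ d

/-- `l` is a least common multiple of `a` and `b` (lcm's are unique up to units). -/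
def IsLcm {α : Type*} [CommMonoid α] (l a b : α) : Prop :=
  a ∣ l ∧ b ∣ l ∧ ∀ e, a ∣ e → b ∣ e → l ∣ e


theorem lC_ne_zero {σ : Type*} (m : MonomialOrder σ) {R : Type*} [CommSemiring R]
    {f : MvPolynomial σ R} (hf : f ≠ 0) : lC m f ≠ 0 := by
  obtain ⟨d, hd, hsup⟩ := Finset.exists_mem_eq_sup f.support (support_nonempty.2 hf)
    (fun d => m.toSyn d)
  rw [lC, mdeg, hsup, m.toSyn.symm_apply_apply]
  exact mem_support_iff.mp hd

theorem IsLcm.exists_cofactor {α : Type*} [CommMonoidWithZero α] [IsCancelMulZero α]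
    {M a b u v L x y : α}
    (hM : IsLcm M a b) (ha : a ≠ 0) (hb : b ≠ 0) (hu : M = a * u) (hv : M = b * v)
    (hx : L = a * x) (hy : L = b * y) :
    ∃ w, L = w * M ∧ x = w * u ∧ y = w * v := by
  obtain ⟨w, hw⟩ := hM.2.2 L ⟨x, hx⟩ ⟨y, hy⟩
  refine ⟨w, by rw [hw, mul_comm], mul_left_cancel₀ ha ?_, mul_left_cancel₀ hb ?_⟩
  · rw [← hx, hw, hu, mul_assoc, mul_comm u]
  · rw [← hy, hw, hv, mul_assoc, mul_comm v]

theorem C_mul_monomial_one_mul_C_mul_monomial_one_mul {σ R : Type*} [CommSemiring R]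
    (a b : R) (s t : σ →₀ ℕ) (p : MvPolynomial σ R) :
    C a * monomial s 1 * (C b * monomial t 1 * p) = C (a * b) * monomial (s + t) 1 * p := by
  rw [C_mul, show monomial (s + t) (1 : R) = monomial s 1 * monomial t 1 by
    rw [monomial_mul, mul_one]]
  ring

theorem C_mul_sub_eq_sub_of_cofactors {σ R : Type*} [CommRing R] (f g h : MvPolynomial σ R)
    {α β δ γ γ₁ γ₂ : σ →₀ ℕ} (hγ₁ : γ₁ ≤ γ) (hγ₂ : γ₂ ≤ γ) (hα : α ≤ γ₁) (hδ₁ : δ ≤ γ₁)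
    (hβ : β ≤ γ₂) (hδ₂ : δ ≤ γ₂) {lam u v w₁ w₂ u₁ v₁ u₂ v₂ : R}
    (hu : lam * u = w₁ * u₁) (hv : lam * v = w₂ * u₂) (hw : w₁ * v₁ = w₂ * v₂) :
    C lam * (C u * monomial (γ - α) 1 * f - C v * monomial (γ - β) 1 * g) =
      C w₁ * monomial (γ - γ₁) 1 *
          (C u₁ * monomial (γ₁ - α) 1 * f - C v₁ * monomial (γ₁ - δ) 1 * h)
        - C w₂ * monomial (γ - γ₂) 1 *
          (C u₂ * monomial (γ₂ - β) 1 * g - C v₂ * monomial (γ₂ - δ) 1 * h) := by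
  simp only [mul_sub, C_mul_monomial_one_mul_C_mul_monomial_one_mul,
    tsub_add_tsub_cancel hγ₁ hα, tsub_add_tsub_cancel hγ₁ hδ₁,
    tsub_add_tsub_cancel hγ₂ hβ, tsub_add_tsub_cancel hγ₂ hδ₂, ← hu, ← hv, hw, C_mul]
  ring

theorem triangular_identity_general {σ K : Type*} [Field K] (m : MonomialOrder σ)
    (f g h : MvPolynomial σ (Polynomial K))
    (hf : f ∉ Set.range (C : Polynomial K → MvPolynomial σ (Polynomial K)))
    (hg : g ∉ Set.range (C : Polynomial K → MvPolynomial σ (Polynomial K)))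
    (hh : h ∉ Set.range (C : Polynomial K → MvPolynomial σ (Polynomial K)))
    (hdvd : mdeg m h ≤ mdeg m f ⊔ mdeg m g)
    (γfg γfh γgh : σ →₀ ℕ)
    (hγfg : γfg = mdeg m f ⊔ mdeg m g)
    (hγfh : γfh = mdeg m f ⊔ mdeg m h)
    (hγgh : γgh = mdeg m g ⊔ mdeg m h)
    (Mfg Mfh Mgh ufg vfg ufh vfh ugh vgh d lam : Polynomial K)
    (hufg : Mfg = lC m f * ufg)
    (hvfg : Mfg = lC m g * vfg)
    (hMfh : IsLcm Mfh (lC m f) (lC m h)) (hufh : Mfh = lC m f * ufh)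
    (hvfh : Mfh = lC m h * vfh)
    (hMgh : IsLcm Mgh (lC m g) (lC m h)) (hugh : Mgh = lC m g * ugh)
    (hvgh : Mgh = lC m h * vgh)
    (hd : IsGcd d Mfg (lC m h)) (hlam : lC m h = d * lam) :
    γfh ≤ γfg ∧ γgh ≤ γfg ∧
    ∃ w1 w2 : Polynomial K,
      lam * Mfg = w1 * Mfh ∧ lam * Mfg = w2 * Mgh ∧
      C lam * (C ufg * monomial (γfg - mdeg m f) 1 * f
                - C vfg * monomial (γfg - mdeg m g) 1 * g) =
        C w1 * monomial (γfg - γfh) 1 *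
            (C ufh * monomial (γfh - mdeg m f) 1 * f
              - C vfh * monomial (γfh - mdeg m h) 1 * h)
          - C w2 * monomial (γfg - γgh) 1 *
            (C ugh * monomial (γgh - mdeg m g) 1 * g
              - C vgh * monomial (γgh - mdeg m h) 1 * h) := by
  have lC_ne_zero_of_notMem {p : MvPolynomial σ (Polynomial K)}
      (hp : p ∉ Set.range (C : Polynomial K → MvPolynomial σ (Polynomial K))) : lC m p ≠ 0 :=
    lC_ne_zero m fun hp0 => hp ⟨0, by rw [hp0, C_0]⟩
  have hfh : γfh ≤ γfg := hγfh ▸ hγfg ▸ sup_le le_sup_left hdvd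
  have hgh : γgh ≤ γfg := hγgh ▸ hγfg ▸ sup_le le_sup_right hdvd
  obtain ⟨e, he⟩ := hd.1
  have hLh : lam * Mfg = lC m h * e := by rw [he, hlam]; ring
  obtain ⟨w1, hw1, hufh', hvfh'⟩ := IsLcm.exists_cofactor hMfh (lC_ne_zero_of_notMem hf)
    (lC_ne_zero_of_notMem hh) hufh hvfh
    (show lam * Mfg = lC m f * (lam * ufg) by rw [hufg]; ring) hLh
  obtain ⟨w2, hw2, hugh', hvgh'⟩ := IsLcm.exists_cofactor hMgh (lC_ne_zero_of_notMem hg)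
    (lC_ne_zero_of_notMem hh) hugh hvgh
    (show lam * Mfg = lC m g * (lam * vfg) by rw [hvfg]; ring) hLh
  refine ⟨hfh, hgh, w1, w2, hw1, hw2, ?_⟩
  subst hγfh hγgh
  exact C_mul_sub_eq_sub_of_cofactors f g h hfh hgh le_sup_left le_sup_right le_sup_left
    le_sup_right hufh' hugh' (hvfh'.symm.trans hvgh')

/-- **Lemma (triangular identity of S-polynomials over `K[x₁]`).**  If
`lcm(lm f, lm g)` is divisible by `lm h`, then with `λ = lc h / gcd(lcm(lc f,lc g), lc h)`
one has `λ·S(f,g) = (λ·lcm(lt f,lt g)/lcm(lt f,lt h))·S(f,h)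
− (λ·lcm(lt f,lt g)/lcm(lt g,lt h))·S(g,h)`, the displayed quotients of terms being
genuine terms (the divisions of coefficients and of monomials are exact). -/
theorem triangular_identity {σ K : Type*} [Field K] (m : MonomialOrder σ)
    (f g h : MvPolynomial σ (Polynomial K))
    (hf : f ∉ Set.range (C : Polynomial K → MvPolynomial σ (Polynomial K)))
    (hg : g ∉ Set.range (C : Polynomial K → MvPolynomial σ (Polynomial K)))
    (hh : h ∉ Set.range (C : Polynomial K → MvPolynomial σ (Polynomial K)))
    (hdvd : mdeg m h ≤ mdeg m f ⊔ mdeg m g)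
    (γfg γfh γgh : σ →₀ ℕ)
    (hγfg : γfg = mdeg m f ⊔ mdeg m g)
    (hγfh : γfh = mdeg m f ⊔ mdeg m h)
    (hγgh : γgh = mdeg m g ⊔ mdeg m h)
    (Mfg Mfh Mgh ufg vfg ufh vfh ugh vgh d lam : Polynomial K)
    (hMfg : IsLcm Mfg (lC m f) (lC m g)) (hufg : Mfg = lC m f * ufg)
    (hvfg : Mfg = lC m g * vfg)
    (hMfh : IsLcm Mfh (lC m f) (lC m h)) (hufh : Mfh = lC m f * ufh)
    (hvfh : Mfh = lC m h * vfh)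
    (hMgh : IsLcm Mgh (lC m g) (lC m h)) (hugh : Mgh = lC m g * ugh)
    (hvgh : Mgh = lC m h * vgh)
    (hd : IsGcd d Mfg (lC m h)) (hlam : lC m h = d * lam) :
    γfh ≤ γfg ∧ γgh ≤ γfg ∧
    ∃ w1 w2 : Polynomial K,
      lam * Mfg = w1 * Mfh ∧ lam * Mfg = w2 * Mgh ∧
      C lam * (C ufg * monomial (γfg - mdeg m f) 1 * f
                - C vfg * monomial (γfg - mdeg m g) 1 * g) =
        C w1 * monomial (γfg - γfh) 1 *
            (C ufh * monomial (γfh - mdeg m f) 1 * f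
              - C vfh * monomial (γfh - mdeg m h) 1 * h)
          - C w2 * monomial (γfg - γgh) 1 *
            (C ugh * monomial (γgh - mdeg m g) 1 * g
              - C vgh * monomial (γgh - mdeg m h) 1 * h) :=
  triangular_identity_general m f g h hf hg hh hdvd γfg γfh γgh hγfg hγfh hγgh Mfg Mfh Mgh ufg vfg
    ufh vfh ugh vgh d lam hufg hvfg hMfh hufh hvfh hMgh hugh hvgh hd hlam
end

section
/- Let K be a field and F = {f_1,...,f_s} ⊂ (K[x_1])[x_2,...,x_n] polynomials none of which lies in K[x_1], all with the same leading monomial x̃^α, and suppose lm(f_1 + ... + f_s) ≺ x̃^α. Let p ∈ K[x_1] be irreducible. Then after a permutation of the indices of F, the multiplier b = lcm_{1≤j<s}(lcm(lc(f_j),lc(f_s))/lc(f_j)) is not divisible by p. In particular, the permutation placing in the last position an f_j whose leading coefficient has minimal p-adic valuation achieves this. -/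
open MvPolynomial

theorem exists_forall_pow_dvd_imp_pow_dvd {ι M : Type*} [Finite ι] [Nonempty ι] [Monoid M]
    (p : M) (c : ι → M) : ∃ i₀, ∀ j n, p ^ n ∣ c i₀ → p ^ n ∣ c j := by
  obtain ⟨i₀, hmin⟩ := Finite.exists_min fun i => emultiplicity p (c i)
  refine ⟨i₀, fun j n hn => ?_⟩
  rw [pow_dvd_iff_le_emultiplicity] at hn ⊢
  exact hn.trans (hmin j)

theorem not_dvd_of_isLcm_eq_mul {R : Type*} [CommMonoidWithZero R]
    [IsCancelMulZero R] {p a c M u : R}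
    (ha : FiniteMultiplicity p a) (hc : c ≠ 0) (hac : ∀ n, p ^ n ∣ a → p ^ n ∣ c)
    (hM : IsLcm M c a) (hu : M = c * u) : ¬ p ∣ u := by
  obtain ⟨t, hat, hpt⟩ := ha.exists_eq_pow_mul_and_not_dvd
  obtain ⟨w, hcw⟩ := hac _ ⟨t, hat⟩
  have hct : a ∣ c * t := by
    rw [hcw, mul_right_comm, ← hat]
    exact dvd_mul_right a w
  have hut : u ∣ t := by
    rw [← mul_dvd_mul_iff_left hc, ← hu]
    exact hM.2.2 _ (dvd_mul_right c t) hct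
  exact fun hpu => hpt (hpu.trans hut)

theorem syzygy_multiplier_avoids_p_general {σ K : Type*} [Field K] (m : MonomialOrder σ) (s : ℕ)
    (f : Fin (s + 1) → MvPolynomial σ (Polynomial K))
    (hfR : ∀ j, f j ∉ Set.range (C : Polynomial K → MvPolynomial σ (Polynomial K)))
    (p : Polynomial K) (hp : Irreducible p) :
    ∃ π : Equiv.Perm (Fin (s + 1)),
      (∀ j n, p ^ n ∣ lC m (f (π (Fin.last s))) → p ^ n ∣ lC m (f (π j))) ∧
      ∀ (M u v : Fin s → Polynomial K) (b : Polynomial K),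
        (∀ j, IsLcm (M j) (lC m (f (π j.castSucc))) (lC m (f (π (Fin.last s))))) →
        (∀ j, M j = lC m (f (π j.castSucc)) * u j) →
        (∀ j, M j = lC m (f (π (Fin.last s))) * v j) →
        (∀ j, u j ∣ b) → (∀ e, (∀ j, u j ∣ e) → b ∣ e) →
        ¬ p ∣ b := by
  have hlC : ∀ j, lC m (f j) ≠ 0 := fun j =>
    lC_ne_zero m fun h => hfR j ⟨0, by rw [h, C_0]⟩
  obtain ⟨i₀, hi₀⟩ := exists_forall_pow_dvd_imp_pow_dvd p fun j => lC m (f j)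
  let π := Equiv.swap i₀ (Fin.last s)
  have hπ : π (Fin.last s) = i₀ := Equiv.swap_apply_right _ _
  refine ⟨π, fun j => hπ ▸ hi₀ (π j), ?_⟩
  intro M u _ b hM hu _ _ hlcm hpb
  have hpu : ∀ j, ¬ p ∣ u j := fun j =>
    not_dvd_of_isLcm_eq_mul (FiniteMultiplicity.of_prime_left hp.prime (hlC _)) (hlC _)
      (hπ ▸ hi₀ _) (hM j) (hu j)
  have hb : b ∣ ∏ j, u j := hlcm _ fun j => Finset.dvd_prod_of_mem u (Finset.mem_univ j)
  exact hp.prime.not_dvd_finsetProd (fun j _ => hpu j) (hpb.trans hb)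

/-- **Avoiding an irreducible `p` in the syzygy multiplier.**  In the setting of the
syzygy lemma, for any irreducible `p ∈ K[x₁]` the indices can be permuted so that the
multiplier `b = lcm_{j<s+1}(lcm(lc f_j, lc f_{s+1})/lc f_j)` is not divisible by `p`;
the permutation placing in the last position an `f_j` whose leading coefficient has
minimal `p`-adic valuation achieves this. -/
theorem syzygy_multiplier_avoids_p {σ K : Type*} [Field K] (m : MonomialOrder σ) (s : ℕ)
    (f : Fin (s + 1) → MvPolynomial σ (Polynomial K))
    (hfR : ∀ j, f j ∉ Set.range (C : Polynomial K → MvPolynomial σ (Polynomial K)))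
    (α : σ →₀ ℕ) (hα : ∀ j, mdeg m (f j) = α)
    (hlt : m.toSyn (mdeg m (∑ j, f j)) < m.toSyn α)
    (p : Polynomial K) (hp : Irreducible p) :
    ∃ π : Equiv.Perm (Fin (s + 1)),
      (∀ j n, p ^ n ∣ lC m (f (π (Fin.last s))) → p ^ n ∣ lC m (f (π j))) ∧
      ∀ (M u v : Fin s → Polynomial K) (b : Polynomial K),
        (∀ j, IsLcm (M j) (lC m (f (π j.castSucc))) (lC m (f (π (Fin.last s))))) →
        (∀ j, M j = lC m (f (π j.castSucc)) * u j) →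
        (∀ j, M j = lC m (f (π (Fin.last s))) * v j) →
        (∀ j, u j ∣ b) → (∀ e, (∀ j, u j ∣ e) → b ∣ e) →
        ¬ p ∣ b :=
  syzygy_multiplier_avoids_p_general m s f hfR p hp
end

section
/- Let K be a field, q ∈ K[x_1] nonconstant, R_q = K[x_1]/⟨q⟩, and F = {f_1,...,f_s} ⊂ R_q[x_2,...,x_n] polynomials none in R_q, all with the same leading monomial x̃^α, such that f = f_1 + ... + f_s has lm(f) ≺ x̃^α. Then there exist b, b_1,...,b_{s−1} ∈ R_q, all nonzero, with b·f = Σ_{j=1}^{s−1} b_j·S(f_j, f_s), where S is the S-polynomial over R_q. Moreover, for every irreducible factor p of q, the indices can be permuted so that the lift of b to K[x_1] is not divisible by p. -/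
/-!
The lifts `l j ∈ K[x₁]` of the leading coefficients sum to zero in `R_q`, because the leading
terms of the `f j` cancel, hence already in `K[x₁]`, as all of them have degree `< deg q`.
With `lcm(l j, L) = l j * u j = L * v j` (`L` the last lift) and `a = lcm_j u j = u j * w j`,
this gives `∑ j, w j * v j = -a`, which is exactly the syzygy
`a * ∑ f = ∑ w j * (u j * f j - v j * f_last)`. Each `u j` divides `L`, so `a ∣ L`; as
`0 ≠ L` has degree `< deg q`, the images of `a` and the `w j` in `R_q` are nonzero. If `L`
has minimal `p`-adic valuation `k` among the `l j`, then `u j` divides `L / p ^ k`, which is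
prime to `p`, so `p ∤ a`.
-/

open MvPolynomial

theorem sum_lC_eq_zero_of_mdeg_sum_lt {σ R ι : Type*} [CommSemiring R] [Fintype ι]
    (mo : MonomialOrder σ) {f : ι → MvPolynomial σ R}
    {α : σ →₀ ℕ} (hα : ∀ j, mdeg mo (f j) = α)
    (hlt : mo.toSyn (mdeg mo (∑ j, f j)) < mo.toSyn α) :
    ∑ j, lC mo (f j) = 0 := by
  have hcoeff : ∑ j, lC mo (f j) = (∑ j, f j).coeff α := by
    simp only [lC, hα, coeff_sum]
  rw [hcoeff]
  exact mo.coeff_eq_zero_of_lt hlt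

/-- With `L = l (Fin.last s)`: `u j = lcm(l j, L) / l j` is the `m_j` of the paper,
`v j = lcm(l j, L) / L`, `a = lcm_j m_j`, and `w j = a / m_j`. -/
structure LcmCofactors {α : Type*} [CommMonoid α] {s : ℕ} (l : Fin (s + 1) → α) where
  (M u v w : Fin s → α)
  a : α
  isLcm : ∀ j, IsLcm (M j) (l j.castSucc) (l (Fin.last s))
  M_eq_mul_u : ∀ j, M j = l j.castSucc * u j
  M_eq_mul_v : ∀ j, M j = l (Fin.last s) * v j
  u_dvd_a : ∀ j, u j ∣ a
  a_dvd : ∀ e, (∀ j, u j ∣ e) → a ∣ e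
  a_eq_mul_w : ∀ j, a = u j * w j

namespace LcmCofactors

noncomputable def ofLcm {α : Type*} [CommMonoidWithZero α] [NormalizedGCDMonoid α]
    {s : ℕ} (l : Fin (s + 1) → α) : LcmCofactors l :=
  let u j := (dvd_lcm_left (l j.castSucc) (l (Fin.last s))).choose
  { M := fun j => lcm (l j.castSucc) (l (Fin.last s))
    u := u
    v := fun j => (dvd_lcm_right (l j.castSucc) (l (Fin.last s))).choose
    w := fun j => (Finset.dvd_lcm (f := u) (Finset.mem_univ j)).choose
    a := Finset.univ.lcm u
    isLcm := fun _ => ⟨dvd_lcm_left _ _, dvd_lcm_right _ _, fun _ => lcm_dvd⟩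
    M_eq_mul_u := fun _ => (dvd_lcm_left _ _).choose_spec
    M_eq_mul_v := fun _ => (dvd_lcm_right _ _).choose_spec
    u_dvd_a := fun j => Finset.dvd_lcm (Finset.mem_univ j)
    a_dvd := fun _ he => Finset.lcm_dvd fun j _ => he j
    a_eq_mul_w := fun j => (Finset.dvd_lcm (f := u) (Finset.mem_univ j)).choose_spec }

theorem w_dvd_a {α : Type*} [CommMonoid α] {s : ℕ} {l : Fin (s + 1) → α} (c : LcmCofactors l)
    (j : Fin s) : c.w j ∣ c.a :=
  Dvd.intro_left _ (c.a_eq_mul_w j).symm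

section Divisibility

variable {α : Type*} [CommMonoidWithZero α] [IsCancelMulZero α] {s : ℕ} {l : Fin (s + 1) → α}
  (c : LcmCofactors l)

theorem u_dvd_of_dvd {j : Fin s} (hj : l j.castSucc ≠ 0) {d y : α} (hd : d ∣ l j.castSucc)
    (hL : l (Fin.last s) = d * y) : c.u j ∣ y := by
  obtain ⟨x, hx⟩ := hd
  have hM : c.M j ∣ l j.castSucc * y :=
    (c.isLcm j).2.2 _ (dvd_mul_right _ _) ⟨x, by rw [hL, hx]; ac_rfl⟩
  rwa [c.M_eq_mul_u, mul_dvd_mul_iff_left hj] at hM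

theorem a_dvd_last (hl : ∀ j : Fin s, l j.castSucc ≠ 0) : c.a ∣ l (Fin.last s) :=
  c.a_dvd _ fun j => c.u_dvd_of_dvd (hl j) (one_dvd _) (one_mul _).symm

theorem not_prime_dvd_a (hl : ∀ j : Fin s, l j.castSucc ≠ 0) {p y : α} (hp : Prime p) {k : ℕ}
    (hk : ∀ j : Fin s, p ^ k ∣ l j.castSucc) (hL : l (Fin.last s) = p ^ k * y)
    (hpy : ¬ p ∣ y) : ¬ p ∣ c.a := by
  intro hpa
  have hprod : p ∣ ∏ j, c.u j :=
    hpa.trans (c.a_dvd _ fun j => Finset.dvd_prod_of_mem c.u (Finset.mem_univ j))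
  obtain ⟨j, -, hpu⟩ := hp.exists_mem_finset_dvd hprod
  exact hpy (hpu.trans (c.u_dvd_of_dvd (hl j) (hk j) hL))

end Divisibility

section Syzygy

variable {R : Type*} [CommRing R] [IsDomain R] {s : ℕ} {l : Fin (s + 1) → R}
  (c : LcmCofactors l)

theorem sum_w_mul_v (hsum : ∑ j, l j = 0) (hL : l (Fin.last s) ≠ 0) :
    ∑ j, c.w j * c.v j = -c.a := by
  have hterm : ∀ j, c.w j * c.v j * l (Fin.last s) = c.a * l j.castSucc := fun j => by
    rw [c.a_eq_mul_w j, mul_assoc, mul_comm (c.v j), ← c.M_eq_mul_v, c.M_eq_mul_u]; ring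
  have hlast : ∑ j : Fin s, l j.castSucc = -l (Fin.last s) := by
    rw [Fin.sum_univ_castSucc] at hsum
    exact eq_neg_of_add_eq_zero_left hsum
  apply mul_right_cancel₀ hL
  rw [Finset.sum_mul, Finset.sum_congr rfl fun j _ => hterm j, ← Finset.mul_sum, hlast]
  ring

theorem map_a_mul_sum {S : Type*} [CommRing S] (φ : R →+* S) (hsum : ∑ j, l j = 0)
    (hL : l (Fin.last s) ≠ 0) (g : Fin (s + 1) → S) :
    φ c.a * ∑ j, g j =
      ∑ j, φ (c.w j) * (φ (c.u j) * g j.castSucc - φ (c.v j) * g (Fin.last s)) := by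
  symm
  calc ∑ j, φ (c.w j) * (φ (c.u j) * g j.castSucc - φ (c.v j) * g (Fin.last s))
      = ∑ j, (φ c.a * g j.castSucc - φ (c.w j * c.v j) * g (Fin.last s)) :=
        Finset.sum_congr rfl fun j _ => by rw [c.a_eq_mul_w j, map_mul, map_mul]; ring
    _ = φ c.a * ∑ j : Fin s, g j.castSucc - φ (∑ j, c.w j * c.v j) * g (Fin.last s) := by
        rw [Finset.sum_sub_distrib, Finset.mul_sum, map_sum, Finset.sum_mul]
    _ = φ c.a * ∑ j, g j := by
        rw [c.sum_w_mul_v hsum hL, map_neg, Fin.sum_univ_castSucc]; ring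

end Syzygy

end LcmCofactors

namespace Polynomial

theorem degree_sum_lt {R ι : Type*} [Semiring R] {t : Finset ι} (ht : t.Nonempty) {f : ι → R[X]}
    {d : WithBot ℕ} (hf : ∀ i ∈ t, (f i).degree < d) : (∑ i ∈ t, f i).degree < d := by
  obtain ⟨i, hi⟩ := ht
  exact (degree_sum_le t f).trans_lt
    ((Finset.sup_lt_iff (bot_le.trans_lt (hf i hi))).2 hf)

variable {R : Type*} [CommRing R] [IsDomain R]

theorem eq_zero_of_mk_eq_zero_of_degree_lt {q x : R[X]} (hx : x.degree < q.degree)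
    (h : Ideal.Quotient.mk (Ideal.span {q}) x = 0) : x = 0 :=
  eq_zero_of_dvd_of_degree_lt (Ideal.mem_span_singleton.1 (Ideal.Quotient.eq_zero_iff_mem.1 h)) hx

theorem mk_ne_zero_of_dvd_of_degree_lt {q x y : R[X]} (hxy : x ∣ y) (hy : y ≠ 0)
    (hdeg : y.degree < q.degree) : Ideal.Quotient.mk (Ideal.span {q}) x ≠ 0 := by
  obtain ⟨z, rfl⟩ := hxy
  intro hx
  exact hy (eq_zero_of_mk_eq_zero_of_degree_lt hdeg (by rw [map_mul, hx, zero_mul]))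

end Polynomial

open scoped Polynomial in
theorem sum_lift_lC_eq_zero {σ R ι : Type*} [CommRing R] [IsDomain R] [Fintype ι] [Nonempty ι]
    (mo : MonomialOrder σ) {q : R[X]} {f : ι → MvPolynomial σ (R[X] ⧸ Ideal.span {q})}
    {α : σ →₀ ℕ} (hα : ∀ j, mdeg mo (f j) = α)
    (hlt : mo.toSyn (mdeg mo (∑ j, f j)) < mo.toSyn α) {l : ι → R[X]}
    (hdeg : ∀ j, (l j).degree < q.degree)
    (hlC : ∀ j, Ideal.Quotient.mk (Ideal.span {q}) (l j) = lC mo (f j)) : ∑ j, l j = 0 := by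
  refine Polynomial.eq_zero_of_mk_eq_zero_of_degree_lt
    (Polynomial.degree_sum_lt Finset.univ_nonempty fun j _ => hdeg j) ?_
  rw [map_sum]
  simpa only [hlC] using sum_lC_eq_zero_of_mdeg_sum_lt mo hα hlt

open scoped Polynomial in
theorem LcmCofactors.syzygy_mod {σ R : Type*} [CommRing R] [IsDomain R] {q : R[X]} {s : ℕ}
    {l : Fin (s + 1) → R[X]} (c : LcmCofactors l) (hl : ∀ j, l j ≠ 0)
    (hdeg : ∀ j, (l j).degree < q.degree) (hsum : ∑ j, l j = 0)
    (g : Fin (s + 1) → MvPolynomial σ (R[X] ⧸ Ideal.span {q})) :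
    Ideal.Quotient.mk (Ideal.span {q}) c.a ≠ 0 ∧
      (∀ j, Ideal.Quotient.mk (Ideal.span {q}) (c.w j) ≠ 0) ∧
      C (Ideal.Quotient.mk (Ideal.span {q}) c.a) * (∑ j, g j) =
        ∑ j, C (Ideal.Quotient.mk (Ideal.span {q}) (c.w j)) *
          (C (Ideal.Quotient.mk (Ideal.span {q}) (c.u j)) * g j.castSucc -
            C (Ideal.Quotient.mk (Ideal.span {q}) (c.v j)) * g (Fin.last s)) := by
  have ha := c.a_dvd_last fun j => hl j.castSucc
  refine ⟨Polynomial.mk_ne_zero_of_dvd_of_degree_lt ha (hl _) (hdeg _),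
    fun j => Polynomial.mk_ne_zero_of_dvd_of_degree_lt ((c.w_dvd_a j).trans ha) (hl _) (hdeg _),
    ?_⟩
  simpa only [RingHom.comp_apply] using
    c.map_a_mul_sum ((C : _ →+* MvPolynomial σ _).comp (Ideal.Quotient.mk _)) hsum (hl _) g

theorem syzygy_lemma_PQR_general {σ K : Type*} [Field K] (mo : MonomialOrder σ)
    (q : Polynomial K) (s : ℕ)
    (f : Fin (s + 1) → MvPolynomial σ (Polynomial K ⧸ Ideal.span {q}))
    (hfR : ∀ j, f j ∉ Set.range (C : (Polynomial K ⧸ Ideal.span {q}) →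
      MvPolynomial σ (Polynomial K ⧸ Ideal.span {q})))
    (α : σ →₀ ℕ) (hα : ∀ j, mdeg mo (f j) = α)
    (hlt : mo.toSyn (mdeg mo (∑ j, f j)) < mo.toSyn α)
    (l : Fin (s + 1) → Polynomial K)
    (hl : ∀ j, (l j).degree < q.degree ∧
      Ideal.Quotient.mk (Ideal.span {q}) (l j) = lC mo (f j)) :
    (∃ (M u v w : Fin s → Polynomial K) (a : Polynomial K),
      (∀ j, IsLcm (M j) (l j.castSucc) (l (Fin.last s))) ∧
      (∀ j, M j = l j.castSucc * u j) ∧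
      (∀ j, M j = l (Fin.last s) * v j) ∧
      (∀ j, u j ∣ a) ∧ (∀ e, (∀ j, u j ∣ e) → a ∣ e) ∧
      (∀ j, a = u j * w j) ∧
      Ideal.Quotient.mk (Ideal.span {q}) a ≠ 0 ∧
      (∀ j, Ideal.Quotient.mk (Ideal.span {q}) (w j) ≠ 0) ∧
      C (Ideal.Quotient.mk (Ideal.span {q}) a) * (∑ j, f j) =
        ∑ j, C (Ideal.Quotient.mk (Ideal.span {q}) (w j)) *
          (C (Ideal.Quotient.mk (Ideal.span {q}) (u j)) * f j.castSucc -
            C (Ideal.Quotient.mk (Ideal.span {q}) (v j)) * f (Fin.last s))) ∧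
    ∀ p : Polynomial K, Irreducible p → p ∣ q →
      ∃ (π : Equiv.Perm (Fin (s + 1))) (M u v w : Fin s → Polynomial K) (a : Polynomial K),
        (∀ j, IsLcm (M j) (l (π j.castSucc)) (l (π (Fin.last s)))) ∧
        (∀ j, M j = l (π j.castSucc) * u j) ∧
        (∀ j, M j = l (π (Fin.last s)) * v j) ∧
        (∀ j, u j ∣ a) ∧ (∀ e, (∀ j, u j ∣ e) → a ∣ e) ∧
        (∀ j, a = u j * w j) ∧
        ¬ p ∣ a ∧
        Ideal.Quotient.mk (Ideal.span {q}) a ≠ 0 ∧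
        (∀ j, Ideal.Quotient.mk (Ideal.span {q}) (w j) ≠ 0) ∧
        C (Ideal.Quotient.mk (Ideal.span {q}) a) * (∑ j, f j) =
          ∑ j, C (Ideal.Quotient.mk (Ideal.span {q}) (w j)) *
            (C (Ideal.Quotient.mk (Ideal.span {q}) (u j)) * f (π j.castSucc) -
              C (Ideal.Quotient.mk (Ideal.span {q}) (v j)) * f (π (Fin.last s))) := by
  classical
  have hl0 : ∀ j, l j ≠ 0 := by
    intro j h0
    have hf : f j = 0 := mo.leadingCoeff_eq_zero_iff.1 <| by
      change lC mo (f j) = 0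
      rw [← (hl j).2, h0, map_zero]
    exact hfR j ⟨0, by rw [hf, map_zero]⟩
  have hsum : ∑ j, l j = 0 :=
    sum_lift_lC_eq_zero mo hα hlt (fun j => (hl j).1) fun j => (hl j).2
  refine ⟨?_, fun p hp _ => ?_⟩
  · let c := LcmCofactors.ofLcm l
    obtain ⟨ha, hw, hsyz⟩ := c.syzygy_mod hl0 (fun j => (hl j).1) hsum f
    exact ⟨c.M, c.u, c.v, c.w, c.a, c.isLcm, c.M_eq_mul_u, c.M_eq_mul_v, c.u_dvd_a, c.a_dvd,
      c.a_eq_mul_w, ha, hw, hsyz⟩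
  obtain ⟨i, -, hi⟩ := Finset.univ.exists_min_image (fun j => multiplicity p (l j))
    Finset.univ_nonempty
  obtain ⟨y, hy, hpy⟩ :=
    (FiniteMultiplicity.of_not_isUnit hp.not_isUnit (hl0 i)).exists_eq_pow_mul_and_not_dvd
  let π := Equiv.swap (Fin.last s) i
  let c := LcmCofactors.ofLcm (l ∘ π)
  obtain ⟨ha, hw, hsyz⟩ := c.syzygy_mod (fun j => hl0 _) (fun j => (hl _).1)
    ((Equiv.sum_comp π l).trans hsum) (f ∘ π)
  have hpa : ¬ p ∣ c.a := c.not_prime_dvd_a (fun j => hl0 _) hp.prime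
    (fun j => (pow_dvd_pow p (hi _ (Finset.mem_univ _))).trans (pow_multiplicity_dvd p _))
    (by simpa only [Function.comp_apply, π, Equiv.swap_apply_left] using hy) hpy
  refine ⟨π, c.M, c.u, c.v, c.w, c.a, c.isLcm, c.M_eq_mul_u, c.M_eq_mul_v, c.u_dvd_a, c.a_dvd,
    c.a_eq_mul_w, hpa, ha, hw, ?_⟩
  rwa [show ∑ j, (f ∘ π) j = ∑ j, f j from Equiv.sum_comp π f] at hsyz

/-- **Syzygy lemma over a PQR `R_q = K[x₁]/⟨q⟩`.**  If `f_1, …, f_{s+1} ∉ R_q` all have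
leading monomial `x̃^α` and `f = ∑ f_j` has `lm f ≺ x̃^α`, then there are nonzero
`b, b_j ∈ R_q` with `b·f = ∑_j b_j·S(f_j, f_{s+1})`, where (with lifts `l_j` of the
leading coefficients) `b = σ_q(a)`, `a = lcm_j(lcm(l_j,l_{s+1})/l_j)`, and moreover for
every irreducible factor `p` of `q` the indices can be permuted so that the lift `a` of
`b` is not divisible by `p`. -/
theorem syzygy_lemma_PQR {σ K : Type*} [Field K] (mo : MonomialOrder σ)
    (q : Polynomial K) (hq : 0 < q.degree) (s : ℕ)
    (f : Fin (s + 1) → MvPolynomial σ (Polynomial K ⧸ Ideal.span {q}))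
    (hfR : ∀ j, f j ∉ Set.range (C : (Polynomial K ⧸ Ideal.span {q}) →
      MvPolynomial σ (Polynomial K ⧸ Ideal.span {q})))
    (α : σ →₀ ℕ) (hα : ∀ j, mdeg mo (f j) = α)
    (hlt : mo.toSyn (mdeg mo (∑ j, f j)) < mo.toSyn α)
    (l : Fin (s + 1) → Polynomial K)
    (hl : ∀ j, (l j).degree < q.degree ∧
      Ideal.Quotient.mk (Ideal.span {q}) (l j) = lC mo (f j)) :
    (∃ (M u v w : Fin s → Polynomial K) (a : Polynomial K),
      (∀ j, IsLcm (M j) (l j.castSucc) (l (Fin.last s))) ∧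
      (∀ j, M j = l j.castSucc * u j) ∧
      (∀ j, M j = l (Fin.last s) * v j) ∧
      (∀ j, u j ∣ a) ∧ (∀ e, (∀ j, u j ∣ e) → a ∣ e) ∧
      (∀ j, a = u j * w j) ∧
      Ideal.Quotient.mk (Ideal.span {q}) a ≠ 0 ∧
      (∀ j, Ideal.Quotient.mk (Ideal.span {q}) (w j) ≠ 0) ∧
      C (Ideal.Quotient.mk (Ideal.span {q}) a) * (∑ j, f j) =
        ∑ j, C (Ideal.Quotient.mk (Ideal.span {q}) (w j)) *
          (C (Ideal.Quotient.mk (Ideal.span {q}) (u j)) * f j.castSucc -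
            C (Ideal.Quotient.mk (Ideal.span {q}) (v j)) * f (Fin.last s))) ∧
    ∀ p : Polynomial K, Irreducible p → p ∣ q →
      ∃ (π : Equiv.Perm (Fin (s + 1))) (M u v w : Fin s → Polynomial K) (a : Polynomial K),
        (∀ j, IsLcm (M j) (l (π j.castSucc)) (l (π (Fin.last s)))) ∧
        (∀ j, M j = l (π j.castSucc) * u j) ∧
        (∀ j, M j = l (π (Fin.last s)) * v j) ∧
        (∀ j, u j ∣ a) ∧ (∀ e, (∀ j, u j ∣ e) → a ∣ e) ∧
        (∀ j, a = u j * w j) ∧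
        ¬ p ∣ a ∧
        Ideal.Quotient.mk (Ideal.span {q}) a ≠ 0 ∧
        (∀ j, Ideal.Quotient.mk (Ideal.span {q}) (w j) ≠ 0) ∧
        C (Ideal.Quotient.mk (Ideal.span {q}) a) * (∑ j, f j) =
          ∑ j, C (Ideal.Quotient.mk (Ideal.span {q}) (w j)) *
            (C (Ideal.Quotient.mk (Ideal.span {q}) (u j)) * f (π j.castSucc) -
              C (Ideal.Quotient.mk (Ideal.span {q}) (v j)) * f (π (Fin.last s))) :=
  syzygy_lemma_PQR_general mo q s f hfR α hα hlt l hl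
end

section
/- Let K be a field, q ∈ K[x_1] nonconstant, and R_q = K[x_1]/⟨q⟩ with lift ι_q to representatives of degree < deg q. For any finite set F = {f_1,...,f_s} ⊂ R_q[x_2,...,x_n] of polynomials not in R_q and any f ∈ R_q[x_2,...,x_n], there exist a unit λ ∈ R_q^×, quotients q_1,...,q_s ∈ R_q[x_2,...,x_n] and a remainder r ∈ R_q[x_2,...,x_n] such that λ·f = Σ_{j=1}^s q_j·f_j + r, r is properly reduced with respect to F, and lm(f) = max{ max_j lm(q_j)·lm(f_j), lm(r) }. -/
/-!
One can take `λ = 1`. Divide as usual, cancelling the leading term `c x^α` of the current dividend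
against `F j` whenever `lm (F j) ∣ x^α` and `lc (F j) ∣ c` in `R_q`, and moving it to the remainder
otherwise. Each step lowers the leading monomial, so the process terminates, and no monomial ever
exceeds `lm f`; with `f = ∑ q_j F_j + r` this gives the equality of leading monomials. If a term
`c x^α` of `r` had a unit interim multiplier `μ`, then `lc (F j) ∣ c μ` in `R_q`, so `lc (F j) ∣ c`,
which the algorithm excluded.
-/

open scoped Classical

open MvPolynomial

open scoped MonomialOrder

section ReducedDivision

variable {σ : Type*} (m : MonomialOrder σ) {R : Type*} [CommRing R] {ι : Type*} [Fintype ι]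
  (F : ι → MvPolynomial σ R)

def IsReducedRemainder (r : MvPolynomial σ R) : Prop :=
  ∀ d ∈ r.support, ∀ j, m.degree (F j) ≤ d → ¬ m.leadingCoeff (F j) ∣ r.coeff d

/-- Monomials are bounded by a set rather than by a degree so that the bound
`{e | e ≺[m] m.degree f}` is available also when `m.degree f = 0`. -/
def HasReducedDivisionIn (S : Set (σ →₀ ℕ)) (f : MvPolynomial σ R) : Prop :=
  ∃ (qs : ι → MvPolynomial σ R) (r : MvPolynomial σ R), f = ∑ j, qs j * F j + r ∧
    (∀ j, ∀ e ∈ (qs j).support, e + m.degree (F j) ∈ S) ∧ (r.support : Set _) ⊆ S ∧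
    IsReducedRemainder m F r

namespace HasReducedDivisionIn

variable {m F} {S T : Set (σ →₀ ℕ)} {f g : MvPolynomial σ R}

lemma zero : HasReducedDivisionIn m F S 0 :=
  ⟨0, 0, by simp, by simp, by simp, by simp [IsReducedRemainder]⟩

lemma mono (h : HasReducedDivisionIn m F S f) (hST : S ⊆ T) : HasReducedDivisionIn m F T f := by
  obtain ⟨qs, r, rfl, hqs, hr, hred⟩ := h
  exact ⟨qs, r, rfl, fun j e he => hST (hqs j e he), hr.trans hST, hred⟩

lemma add_monomial_mul (h : HasReducedDivisionIn m F S g) {j : ι} {e : σ →₀ ℕ} (t : R)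
    (he : e + m.degree (F j) ∈ S) : HasReducedDivisionIn m F S (g + monomial e t * F j) := by
  obtain ⟨qs, r, rfl, hqs, hr, hred⟩ := h
  refine ⟨qs + Pi.single j (monomial e t), r, ?_, ?_, hr, hred⟩
  · simp only [Pi.add_apply, add_mul, Finset.sum_add_distrib, Pi.single_apply, ite_mul, zero_mul,
      Finset.sum_ite_eq', Finset.mem_univ, if_true]
    ring
  · intro i e' he'
    rcases Finset.mem_union.mp (support_add he') with he' | he'
    · exact hqs i e' he'
    · obtain rfl : i = j := by
        by_contra hij
        simp [hij] at he'
      obtain rfl : e' = e := by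
        simpa using support_monomial_subset (by simpa using he')
      exact he

lemma add_monomial (h : HasReducedDivisionIn m F S g) {d : σ →₀ ℕ} (hd : d ∉ S) {c : R}
    (hc : ∀ j, m.degree (F j) ≤ d → ¬ m.leadingCoeff (F j) ∣ c) :
    HasReducedDivisionIn m F (insert d S) (g + monomial d c) := by
  obtain ⟨qs, r, rfl, hqs, hr, hred⟩ := h
  have hrd : r.coeff d = 0 := notMem_support_iff.mp fun hmem => hd (hr hmem)
  refine ⟨qs, r + monomial d c, by ring, fun j e he => Set.mem_insert_of_mem _ (hqs j e he),
    ?_, ?_⟩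
  · intro e he
    rcases Finset.mem_union.mp (support_add he) with he | he
    · exact Set.mem_insert_of_mem _ (hr he)
    · exact Set.mem_insert_iff.mpr (.inl (by simpa using support_monomial_subset he))
  · intro e he j hj
    by_cases hed : e = d
    · subst hed
      simpa [hrd] using hc j hj
    · have hre : (r + monomial d c).coeff e = r.coeff e := by
        simp [coeff_monomial, Ne.symm hed]
      rw [hre]
      exact hred e (by rwa [mem_support_iff, ← hre, ← mem_support_iff]) j hj

end HasReducedDivisionIn

section LeadingTermCancellation

variable {m} {f : MvPolynomial σ R}

lemma support_subset_lt_of_degree_le {g : MvPolynomial σ R} {d : σ →₀ ℕ} (hg : m.degree g ≼[m] d)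
    (hgd : g.coeff d = 0) : (g.support : Set (σ →₀ ℕ)) ⊆ {e | e ≺[m] d} := by
  intro e he
  refine lt_of_le_of_ne (m.degree_le_iff.mp hg e he) fun hed => ?_
  rw [m.toSyn.injective hed] at he
  exact mem_support_iff.mp he hgd

lemma support_sub_leadingTerm_subset :
    ((f - m.leadingTerm f).support : Set (σ →₀ ℕ)) ⊆ {e | e ≺[m] m.degree f} :=
  support_subset_lt_of_degree_le (m.degree_sub_leadingTerm_le f)
    (by simp [MonomialOrder.leadingTerm, MonomialOrder.leadingCoeff])

lemma support_sub_monomial_mul_subset {b : MvPolynomial σ R} {t : R}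
    (hbf : m.degree b ≤ m.degree f) (ht : m.leadingCoeff f = m.leadingCoeff b * t) :
    ((f - monomial (m.degree f - m.degree b) t * b).support : Set (σ →₀ ℕ)) ⊆
      {e | e ≺[m] m.degree f} := by
  have hdeg : m.degree f - m.degree b + m.degree b = m.degree f := tsub_add_cancel_of_le hbf
  have hp : m.degree (monomial (m.degree f - m.degree b) t * b) ≼[m] m.degree f := by
    grw [m.degree_mul_le, map_add, m.degree_monomial_le, ← map_add, hdeg]
  refine support_subset_lt_of_degree_le (m.degree_sub_le.trans (sup_le le_rfl hp)) ?_
  have hpf := coeff_monomial_mul (m.degree b) (m.degree f - m.degree b) t b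
  rw [hdeg] at hpf
  rw [coeff_sub, hpf]
  change m.leadingCoeff f - t * m.leadingCoeff b = 0
  rw [ht, mul_comm, sub_self]

end LeadingTermCancellation

theorem hasReducedDivisionIn_degree_le (f : MvPolynomial σ R) :
    HasReducedDivisionIn m F {e | e ≼[m] m.degree f} f := by
  induction hfa : m.toSyn (m.degree f) using WellFoundedLT.induction generalizing f with
  | _ a ih =>
  subst hfa
  have below : ∀ g : MvPolynomial σ R, (g.support : Set _) ⊆ {e | e ≺[m] m.degree f} →
      HasReducedDivisionIn m F {e | e ≺[m] m.degree f} g := by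
    intro g hg
    obtain rfl | hg0 := eq_or_ne g 0
    · exact .zero
    have hgf : m.degree g ≺[m] m.degree f := hg (m.degree_mem_support hg0)
    exact (ih _ hgf g rfl).mono fun e he => lt_of_le_of_lt he hgf
  have lt_subset_le : {e | e ≺[m] m.degree f} ⊆ {e | e ≼[m] m.degree f} :=
    fun e he => le_of_lt he
  by_cases hred : ∃ j, m.degree (F j) ≤ m.degree f ∧ m.leadingCoeff (F j) ∣ m.leadingCoeff f
  · obtain ⟨j, hjf, t, ht⟩ := hred
    have := ((below _ (support_sub_monomial_mul_subset hjf ht)).mono lt_subset_le).add_monomial_mul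
      t (show _ ≼[m] m.degree f by rw [tsub_add_cancel_of_le hjf])
    rwa [sub_add_cancel] at this
  · push Not at hred
    have := ((below _ support_sub_leadingTerm_subset).add_monomial (lt_irrefl _) hred).mono
      (Set.insert_subset_iff.mpr ⟨show m.degree f ≼[m] m.degree f from le_rfl, lt_subset_le⟩)
    rwa [MonomialOrder.leadingTerm, sub_add_cancel] at this

lemma toSyn_degree_sum_mul_add_le (qs : ι → MvPolynomial σ R) (r : MvPolynomial σ R) :
    m.toSyn (m.degree (∑ j, qs j * F j + r)) ≤
      ((Finset.univ.filter fun j => qs j ≠ 0).sup fun j =>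
        m.toSyn (m.degree (qs j) + m.degree (F j))) ⊔ m.toSyn (m.degree r) := by
  refine m.degree_add_le.trans (sup_le_sup_right ?_ _)
  rw [← Finset.sum_filter_of_ne (p := fun j => qs j ≠ 0) fun j _ h hq => h (by simp [hq])]
  exact m.degree_sum_le.trans (Finset.sup_mono_fun fun j _ => m.degree_mul_le)

theorem exists_eq_sum_mul_add_isReducedRemainder (f : MvPolynomial σ R) :
    ∃ (qs : ι → MvPolynomial σ R) (r : MvPolynomial σ R),
      f = ∑ j, qs j * F j + r ∧ IsReducedRemainder m F r ∧
      m.toSyn (m.degree f) = ((Finset.univ.filter fun j => qs j ≠ 0).sup fun j =>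
        m.toSyn (m.degree (qs j) + m.degree (F j))) ⊔ m.toSyn (m.degree r) := by
  obtain ⟨qs, r, hf, hqs, hr, hred⟩ := hasReducedDivisionIn_degree_le m F f
  refine ⟨qs, r, hf, hred, le_antisymm ?_ (sup_le ?_ ?_)⟩
  · rw [hf]
    exact toSyn_degree_sum_mul_add_le m F qs r
  · exact Finset.sup_le fun j hj => hqs j _ (m.degree_mem_support (Finset.mem_filter.mp hj).2)
  · exact m.degree_le_iff.mpr hr

end ReducedDivision

theorem proper_division_PQR_general {σ K : Type*} [Field K] (mo : MonomialOrder σ)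
    (q : Polynomial K)
    (iota : (Polynomial K ⧸ Ideal.span {q}) → Polynomial K)
    (hiota : ∀ a, (iota a).degree < q.degree ∧
      Ideal.Quotient.mk (Ideal.span {q}) (iota a) = a)
    (s : ℕ) (F : Fin s → MvPolynomial σ (Polynomial K ⧸ Ideal.span {q}))
    (f : MvPolynomial σ (Polynomial K ⧸ Ideal.span {q})) :
    ∃ (lam : Polynomial K ⧸ Ideal.span {q})
      (qs : Fin s → MvPolynomial σ (Polynomial K ⧸ Ideal.span {q}))
      (r : MvPolynomial σ (Polynomial K ⧸ Ideal.span {q})),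
      IsUnit lam ∧
      C lam * f = (∑ j, qs j * F j) + r ∧
      (∀ d ∈ r.support, ∀ j, mdeg mo (F j) ≤ d →
        ∀ L u : Polynomial K, IsLcm L (iota (r.coeff d)) (iota (lC mo (F j))) →
          L = iota (r.coeff d) * u →
          ¬ IsUnit (Ideal.Quotient.mk (Ideal.span {q}) u)) ∧
      mo.toSyn (mdeg mo f) =
        ((Finset.univ.filter fun j => qs j ≠ 0).sup fun j =>
            mo.toSyn (mdeg mo (qs j) + mdeg mo (F j))) ⊔ mo.toSyn (mdeg mo r) := by
  -- `mdeg` and `lC` are definitionally `MonomialOrder.degree` and `MonomialOrder.leadingCoeff`.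
  obtain ⟨qs, r, hsum, hred, hdeg⟩ := exists_eq_sum_mul_add_isReducedRemainder mo F f
  refine ⟨1, qs, r, isUnit_one, by rw [map_one, one_mul, hsum], ?_, hdeg⟩
  intro d hd j hjd L u hlcm hLu hu
  -- `lc (F j)` divides `L = c * u` in `K[x₁]`; in `R_q` the unit `u` can be cancelled.
  refine hred d hd j hjd ((IsUnit.dvd_mul_right hu).mp ?_)
  have := map_dvd (Ideal.Quotient.mk (Ideal.span {q})) (hLu ▸ hlcm.2.1)
  rwa [map_mul, (hiota _).2, (hiota _).2] at this

/-- **Proper division over a PQR `R_q = K[x₁]/⟨q⟩`.**  For a finite family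
`F = {f_1, …, f_s}` of polynomials not in `R_q` and any `f`, there exist a unit
`λ ∈ R_q^×`, quotients `q_j` and a remainder `r` with `λ·f = ∑ q_j·f_j + r`, where `r`
is properly reduced with respect to `F` (no term of `r` is properly reducible: whenever
its monomial is divisible by some `lm f_j`, the interim multiplier
`σ_q(lcm(ι c, ι(lc f_j))/ι c)` is not a unit), and
`lm f = max{max_j lm(q_j)·lm(f_j), lm r}` (terms with `q_j = 0` omitted). -/
theorem proper_division_PQR {σ K : Type*} [Field K] (mo : MonomialOrder σ)
    (q : Polynomial K) (hq : 0 < q.degree)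
    (iota : (Polynomial K ⧸ Ideal.span {q}) → Polynomial K)
    (hiota : ∀ a, (iota a).degree < q.degree ∧
      Ideal.Quotient.mk (Ideal.span {q}) (iota a) = a)
    (s : ℕ) (F : Fin s → MvPolynomial σ (Polynomial K ⧸ Ideal.span {q}))
    (hF : ∀ j, F j ∉ Set.range (C : (Polynomial K ⧸ Ideal.span {q}) →
      MvPolynomial σ (Polynomial K ⧸ Ideal.span {q})))
    (f : MvPolynomial σ (Polynomial K ⧸ Ideal.span {q})) :
    ∃ (lam : Polynomial K ⧸ Ideal.span {q})
      (qs : Fin s → MvPolynomial σ (Polynomial K ⧸ Ideal.span {q}))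
      (r : MvPolynomial σ (Polynomial K ⧸ Ideal.span {q})),
      IsUnit lam ∧
      C lam * f = (∑ j, qs j * F j) + r ∧
      (∀ d ∈ r.support, ∀ j, mdeg mo (F j) ≤ d →
        ∀ L u : Polynomial K, IsLcm L (iota (r.coeff d)) (iota (lC mo (F j))) →
          L = iota (r.coeff d) * u →
          ¬ IsUnit (Ideal.Quotient.mk (Ideal.span {q}) u)) ∧
      mo.toSyn (mdeg mo f) =
        ((Finset.univ.filter fun j => qs j ≠ 0).sup fun j =>
            mo.toSyn (mdeg mo (qs j) + mdeg mo (F j))) ⊔ mo.toSyn (mdeg mo r) :=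
  proper_division_PQR_general mo q iota hiota s F f
end
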